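/- arXiv:1005.3050 — 8 statements merged into one kernel-verified Lean document; each statement's English description precedes it below -/
import Mathlib

section
/- Let 0 < a ≤ b be natural numbers and let d = a + b. Then the monomial x₀^a x₁^b in ℂ[x₀,x₁] admits a Waring expansion with b+1 summands: there exist scalars α₁,…,α_{b+1} ∈ ℂ and pairwise linearly independent linear forms L₁,…,L_{b+1} ∈ ℂ[x₀,x₁] such that x₀^a x₁^b = ∑_{i=1}^{b+1} α_i · L_i^d. -/
open MvPolynomial

lemma waring_indep_aux (z w c : ℂ)
    (h : (C z * X 0 + X 1 : MvPolynomial (Fin 2) ℂ) = c • (C w * X 0 + X 1)) :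
    c = 1 ∧ z = c * w := by
  have h1 := congrArg (coeff (Finsupp.single 1 1)) h
  have h2 := congrArg (coeff (Finsupp.single 0 1)) h
  simp [coeff_X', Finsupp.single_eq_single_iff] at h1 h2
  exact ⟨h1.symm, h2⟩

/-- Any monomial `x₀^a x₁^b` with `0 < a ≤ b` in `ℂ[x₀,x₁]` admits a Waring
expansion with `b+1` summands: scalars `αᵢ` and pairwise linearly independent
linear forms `Lᵢ` with `x₀^a x₁^b = ∑ αᵢ Lᵢ^(a+b)`. -/
theorem monomial_complex_waring_expansion (a b : ℕ) (ha : 0 < a) (hab : a ≤ b) :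
    ∃ (α : Fin (b + 1) → ℂ) (L : Fin (b + 1) → MvPolynomial (Fin 2) ℂ),
      (∀ i, (L i).IsHomogeneous 1) ∧
      (∀ i j, i ≠ j → ∀ c : ℂ, L i ≠ c • L j) ∧
      (X 0 ^ a * X 1 ^ b : MvPolynomial (Fin 2) ℂ) = ∑ i, α i • L i ^ (a + b) := by
  classical
  set n := b + 1 with hn
  set d := a + b with hd
  have had : a ≤ d := by omega
  have hζ := Complex.isPrimitiveRoot_exp n (Nat.succ_ne_zero b)
  set ζ := Complex.exp (2 * Real.pi * Complex.I / n) with hζdef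
  have hζ0 : ζ ≠ 0 := hζ.ne_zero (Nat.succ_ne_zero b)
  have hC0 : ((d.choose a : ℂ)) ≠ 0 := Nat.cast_ne_zero.mpr (Nat.choose_pos had).ne'
  have hN0 : ((n : ℂ)) ≠ 0 := Nat.cast_ne_zero.mpr (Nat.succ_ne_zero b)
  refine ⟨fun i => ((ζ ^ a)⁻¹) ^ (i : ℕ) / ((n : ℂ) * (d.choose a : ℂ)),
    fun i => C (ζ ^ (i : ℕ)) * X 0 + X 1, ?_, ?_, ?_⟩
  · intro i
    have h0 : (C (ζ ^ (i : ℕ)) * X 0 : MvPolynomial (Fin 2) ℂ).IsHomogeneous 1 := by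
      simpa using (isHomogeneous_C (Fin 2) (ζ ^ (i : ℕ))).mul (isHomogeneous_X ℂ (0 : Fin 2))
    exact h0.add (isHomogeneous_X ℂ (1 : Fin 2))
  · intro i j hij c h
    obtain ⟨hc, hzw⟩ := waring_indep_aux _ _ _ h
    rw [hc, one_mul] at hzw
    exact hij (Fin.ext (hζ.pow_inj i.isLt j.isLt hzw))
  · -- the key computation
    have expand : ∀ z : ℂ, (C z * X 0 + X 1 : MvPolynomial (Fin 2) ℂ) ^ d
        = ∑ k ∈ Finset.range (d+1), C (z ^ k * (d.choose k : ℂ)) * (X 0 ^ k * X 1 ^ (d - k)) := by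
      intro z
      rw [add_pow]
      refine Finset.sum_congr rfl fun k hk => ?_
      rw [mul_pow, ← C_pow, ← map_natCast (C : ℂ →+* MvPolynomial (Fin 2) ℂ), C_mul]
      ring
    -- geometric sums of roots of unity
    have geom : ∀ k, k ≤ d → (∑ i ∈ Finset.range n, (ζ ^ k * (ζ ^ a)⁻¹) ^ i)
        = if k = a then (n : ℂ) else 0 := by
      intro k hk
      by_cases hka : k = a
      · simp [hka, mul_inv_cancel₀ (pow_ne_zero _ hζ0)]
      · rw [if_neg hka]
        have hw : (ζ ^ k * (ζ ^ a)⁻¹) ^ n = 1 := by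
          rw [mul_pow, inv_pow, ← pow_mul, ← pow_mul, mul_comm k n, mul_comm a n, pow_mul,
            pow_mul, hζ.pow_eq_one]
          simp
        have hw1 : ζ ^ k * (ζ ^ a)⁻¹ ≠ 1 := by
          intro hcon
          rw [mul_inv_eq_one₀ (pow_ne_zero _ hζ0)] at hcon
          rcases lt_or_gt_of_ne hka with hlt | hgt
          · have hone : ζ ^ (a - k) = 1 := by
              rw [pow_sub₀ ζ hζ0 hlt.le, ← hcon]
              exact mul_inv_cancel₀ (pow_ne_zero _ hζ0)
            have hdvd := (hζ.pow_eq_one_iff_dvd _).mp hone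
            have := Nat.le_of_dvd (by omega) hdvd
            omega
          · have hone : ζ ^ (k - a) = 1 := by
              rw [pow_sub₀ ζ hζ0 hgt.le, hcon]
              exact mul_inv_cancel₀ (pow_ne_zero _ hζ0)
            have hdvd := (hζ.pow_eq_one_iff_dvd _).mp hone
            have := Nat.le_of_dvd (by omega) hdvd
            omega
        rw [geom_sum_eq hw1, hw]
        simp
    have step1 : ∀ i : ℕ,
        ((ζ ^ a)⁻¹ ^ i / ((n : ℂ) * (d.choose a : ℂ))) •
            ((C (ζ ^ i) * X 0 + X 1 : MvPolynomial (Fin 2) ℂ) ^ d)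
        = ∑ k ∈ Finset.range (d+1),
            C ((ζ ^ k * (ζ ^ a)⁻¹) ^ i * ((d.choose k : ℂ) / ((n : ℂ) * (d.choose a : ℂ)))) *
              (X 0 ^ k * X 1 ^ (d - k)) := by
      intro i
      rw [expand, Finset.smul_sum]
      refine Finset.sum_congr rfl fun k hk => ?_
      rw [smul_eq_C_mul, ← mul_assoc, ← C_mul]
      congr 2
      rw [mul_pow, ← pow_mul, ← pow_mul, mul_comm i k, pow_mul]
      field_simp
    calc (X 0 ^ a * X 1 ^ b : MvPolynomial (Fin 2) ℂ)
        = ∑ k ∈ Finset.range (d+1),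
            (if k = a then (X 0 ^ a * X 1 ^ b : MvPolynomial (Fin 2) ℂ) else 0) := by
          rw [Finset.sum_ite_eq' (Finset.range (d+1)) a]
          simp [Nat.lt_succ_of_le had]
      _ = ∑ k ∈ Finset.range (d+1),
            C ((∑ i ∈ Finset.range n, (ζ ^ k * (ζ ^ a)⁻¹) ^ i) *
                ((d.choose k : ℂ) / ((n : ℂ) * (d.choose a : ℂ)))) *
              (X 0 ^ k * X 1 ^ (d - k)) := by
          refine Finset.sum_congr rfl fun k hk => ?_
          rw [geom k (by simpa [Nat.lt_succ_iff] using hk)]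
          by_cases hka : k = a
          · subst hka
            have hba : d - k = b := by omega
            rw [if_pos rfl, if_pos rfl, hba]
            have h1 : (n : ℂ) * ((d.choose k : ℂ) / ((n : ℂ) * (d.choose k : ℂ))) = 1 := by
              field_simp
            rw [h1, map_one, one_mul]
          · rw [if_neg hka, if_neg hka, zero_mul, map_zero, zero_mul]
      _ = ∑ k ∈ Finset.range (d+1), ∑ i ∈ Finset.range n,
            C ((ζ ^ k * (ζ ^ a)⁻¹) ^ i * ((d.choose k : ℂ) / ((n : ℂ) * (d.choose a : ℂ)))) *
              (X 0 ^ k * X 1 ^ (d - k)) := by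
          refine Finset.sum_congr rfl fun k hk => ?_
          rw [← Finset.sum_mul, ← map_sum, ← Finset.sum_mul]
      _ = ∑ i ∈ Finset.range n, ∑ k ∈ Finset.range (d+1),
            C ((ζ ^ k * (ζ ^ a)⁻¹) ^ i * ((d.choose k : ℂ) / ((n : ℂ) * (d.choose a : ℂ)))) *
              (X 0 ^ k * X 1 ^ (d - k)) := Finset.sum_comm
      _ = ∑ i ∈ Finset.range n,
            ((ζ ^ a)⁻¹ ^ i / ((n : ℂ) * (d.choose a : ℂ))) •
              ((C (ζ ^ i) * X 0 + X 1 : MvPolynomial (Fin 2) ℂ) ^ d) := by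
          exact Finset.sum_congr rfl fun i _ => (step1 i).symm
      _ = ∑ i : Fin n,
            ((ζ ^ a)⁻¹ ^ (i : ℕ) / ((n : ℂ) * (d.choose a : ℂ))) •
              ((C (ζ ^ (i : ℕ)) * X 0 + X 1 : MvPolynomial (Fin 2) ℂ) ^ d) :=
          (Fin.sum_univ_eq_sum_range _ n).symm
end

section
/- Let 0 < a ≤ b be natural numbers and let d = a + b. If r ≤ b, then there is no way to write the monomial x₀^a x₁^b in ℂ[x₀,x₁] as a linear combination of r d-th powers of linear forms: there exist no scalars α₁,…,α_r ∈ ℂ and linear forms L₁,…,L_r ∈ ℂ[x₀,x₁] with x₀^a x₁^b = ∑_{i=1}^{r} α_i · L_i^d. -/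
/-!
Dehomogenize by `x₀ ↦ 1, x₁ ↦ X` and write `Lᵢ = cᵢ x₀ + eᵢ x₁`, `d = a + b`. Comparing
coefficients of `X^k` gives `(d choose k) tₖ = δ_{k b}` with `tₖ = ∑ αᵢ cᵢ^(d-k) eᵢ^k`. For `k < d`
the forms with `cᵢ = 0` contribute nothing, so `tₖ = ∑ αᵢ cᵢ^d (eᵢ/cᵢ)^k` is a combination of at
most `r ≤ b` geometric sequences. Such a sequence satisfies a linear recurrence of order at most
`b`; as it vanishes for `k < b`, it vanishes at `k = b < d`, contradicting `t_b ≠ 0`.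
-/

theorem Finsupp.exists_eq_single_of_degree_eq_one {σ : Type*} {m : σ →₀ ℕ} (hm : m.degree = 1) :
    ∃ i, m = Finsupp.single i 1 := by
  classical
  obtain ⟨i, hi⟩ := Multiset.card_eq_one.mp ((Finsupp.card_toMultiset m).trans hm)
  exact ⟨i, by rw [← Finsupp.toMultiset_toFinsupp m, hi, Multiset.toFinsupp_singleton]⟩

namespace MvPolynomial.IsHomogeneous

variable {R : Type*} [CommSemiring R]

theorem eq_sum_C_mul_X {σ : Type*} [Fintype σ] {p : MvPolynomial σ R} (hp : p.IsHomogeneous 1) :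
    p = ∑ i, C (coeff (Finsupp.single i 1) p) * X i := by
  classical
  ext m
  simp only [coeff_sum, coeff_C_mul, coeff_X, mul_ite, mul_one, mul_zero]
  by_cases hm : m.degree = 1
  · obtain ⟨j, rfl⟩ := Finsupp.exists_eq_single_of_degree_eq_one hm
    simp [Finsupp.single_left_inj one_ne_zero]
  · rw [hp.coeff_eq_zero hm]
    refine (Finset.sum_eq_zero fun i _ => if_neg ?_).symm
    rintro rfl
    simp at hm

theorem aeval_one_X {p : MvPolynomial (Fin 2) R} (hp : p.IsHomogeneous 1) :
    MvPolynomial.aeval ![1, Polynomial.X] p = Polynomial.C (coeff (Finsupp.single 0 1) p)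
      + Polynomial.C (coeff (Finsupp.single 1 1) p) * Polynomial.X := by
  conv_lhs => rw [hp.eq_sum_C_mul_X]
  simp [Fin.sum_univ_two, Polynomial.algebraMap_eq]

end MvPolynomial.IsHomogeneous

namespace Polynomial

theorem coeff_C_add_C_mul_X_pow {R : Type*} [CommSemiring R] (c e : R) (d k : ℕ) :
    ((C c + C e * X) ^ d).coeff k = d.choose k * c ^ (d - k) * e ^ k := by
  have hterm : ∀ m, (C e * X) ^ m * C c ^ (d - m) * (d.choose m : R[X])
      = C (d.choose m * c ^ (d - m) * e ^ m) * X ^ m := fun m => by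
    simp only [mul_pow, ← C_pow, map_mul, map_natCast]; ring
  simp_rw [add_comm (C c), add_pow, finsetSum_coeff, hterm, coeff_C_mul_X_pow, Finset.sum_ite_eq,
    Finset.mem_range, Nat.lt_succ_iff]
  split_ifs with hk
  · rfl
  · simp [Nat.choose_eq_zero_of_lt (not_le.mp hk)]

theorem coeff_sum_smul_C_add_C_mul_X_pow {R ι : Type*} [CommSemiring R] (s : Finset ι)
    (α c e : ι → R) (d k : ℕ) :
    (∑ i ∈ s, α i • (C (c i) + C (e i) * X) ^ d).coeff k
      = d.choose k * ∑ i ∈ s, α i * (c i ^ (d - k) * e i ^ k) := by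
  simp only [finsetSum_coeff, coeff_smul, coeff_C_add_C_mul_X_pow, smul_eq_mul, Finset.mul_sum]
  exact Finset.sum_congr rfl fun i _ => by ring

end Polynomial

namespace LinearRecurrence

open Polynomial

variable {R : Type*} [CommRing R]

def ofMonic (Q : R[X]) : LinearRecurrence R := ⟨Q.natDegree, fun i => -Q.coeff i⟩

theorem charPoly_ofMonic {Q : R[X]} (hQ : Q.Monic) : (ofMonic Q).charPoly = Q := by
  conv_rhs => rw [hQ.as_sum]
  simp_rw [C_mul_X_pow_eq_monomial, X_pow_eq_monomial,
    ← Fin.sum_univ_eq_sum_range (fun i => monomial i (Q.coeff i))]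
  simp only [charPoly, ofMonic, monomial_neg, Finset.sum_neg_distrib, sub_neg_eq_add,
    add_right_inj]
  rfl

end LinearRecurrence

namespace Finset

open Polynomial

/-- The sequence solves the linear recurrence of order `#s` with characteristic polynomial
`∏ i ∈ s, (X - γ i)`, so its first `#s` terms determine it. -/
theorem sum_mul_pow_eq_zero_of_forall_lt_card {R ι : Type*} [CommRing R]
    (s : Finset ι) (β γ : ι → R) (h : ∀ k < s.card, ∑ i ∈ s, β i * γ i ^ k = 0) (k : ℕ) :
    ∑ i ∈ s, β i * γ i ^ k = 0 := by
  nontriviality R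
  set Q := ∏ i ∈ s, (X - C (γ i))
  set E := LinearRecurrence.ofMonic Q
  have hE : E.charPoly = Q :=
    LinearRecurrence.charPoly_ofMonic (monic_prod_of_monic _ _ fun i _ => monic_X_sub_C (γ i))
  have horder : E.order = s.card := natDegree_finsetProd_X_sub_C_eq_card s γ
  have hgeom : ∀ i ∈ s, E.IsSolution fun k => γ i ^ k := fun i hi => by
    rw [E.geom_sol_iff_root_charPoly, hE, IsRoot, eval_prod]
    exact prod_eq_zero hi (by simp)
  have hsol : E.IsSolution fun k => ∑ i ∈ s, β i * γ i ^ k := by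
    rw [E.is_sol_iff_mem_solSpace]
    convert Submodule.sum_mem _ fun i hi =>
      E.solSpace.smul_mem (β i) ((E.is_sol_iff_mem_solSpace _).mp (hgeom i hi)) using 1
    ext k; simp
  have hzero : E.IsSolution 0 := (E.is_sol_iff_mem_solSpace 0).mpr E.solSpace.zero_mem
  refine congrFun ((E.eq_iff_eqOn_range_order _ 0 hsol hzero).mpr fun n hn => ?_) k
  exact h n (by simpa [horder] using hn)

theorem sum_mul_pow_sub_mul_pow_eq_sum_filter {K ι : Type*} [Field K] [DecidableEq K]
    (s : Finset ι) (α c e : ι → K) {d k : ℕ} (hk : k < d) :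
    ∑ i ∈ s, α i * (c i ^ (d - k) * e i ^ k)
      = ∑ i ∈ s with c i ≠ 0, α i * c i ^ d * (e i / c i) ^ k := by
  rw [sum_filter]
  refine sum_congr rfl fun i _ => ?_
  split_ifs with hc
  · rw [div_pow, pow_sub₀ _ hc hk.le]
    field_simp
  · rw [not_not.mp hc, zero_pow (Nat.sub_ne_zero_of_lt hk)]
    simp

end Finset

open MvPolynomial

theorem monomial_complex_no_short_waring_general (a b r : ℕ) (ha : 0 < a)
    (hr : r ≤ b) :
    ¬ ∃ (α : Fin r → ℂ) (L : Fin r → MvPolynomial (Fin 2) ℂ),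
      (∀ i, (L i).IsHomogeneous 1) ∧
      (X 0 ^ a * X 1 ^ b : MvPolynomial (Fin 2) ℂ) = ∑ i, α i • L i ^ (a + b) := by
  rintro ⟨α, L, hL, hsum⟩
  set c := fun i => coeff (Finsupp.single 0 1) (L i)
  set e := fun i => coeff (Finsupp.single 1 1) (L i)
  set t := fun k => ∑ i, α i * (c i ^ (a + b - k) * e i ^ k)
  have hdehom : (Polynomial.X ^ b : Polynomial ℂ)
      = ∑ i, α i • (Polynomial.C (c i) + Polynomial.C (e i) * Polynomial.X) ^ (a + b) := by
    simpa [(hL _).aeval_one_X] using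
      congrArg (MvPolynomial.aeval ![(1 : Polynomial ℂ), Polynomial.X]) hsum
  have hcoeff (k : ℕ) : (if k = b then 1 else 0) = ((a + b).choose k : ℂ) * t k := by
    rw [← Polynomial.coeff_sum_smul_C_add_C_mul_X_pow, ← hdehom, Polynomial.coeff_X_pow]
  have hvanish (k : ℕ) (hk : k < b) : t k = 0 := by
    have hchoose : ((a + b).choose k : ℂ) ≠ 0 := by exact_mod_cast (Nat.choose_pos (by omega)).ne'
    simpa [hk.ne, hchoose] using hcoeff k
  have hgeom (k : ℕ) (hk : k < a + b) :
      t k = ∑ i with c i ≠ 0, α i * c i ^ (a + b) * (e i / c i) ^ k :=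
    Finset.sum_mul_pow_sub_mul_pow_eq_sum_filter _ α c e hk
  have htb : t b = 0 := by
    rw [hgeom b (by omega)]
    refine Finset.sum_mul_pow_eq_zero_of_forall_lt_card _ _ _ (fun k hk => ?_) b
    have hkb : k < b := hk.trans_le ((Finset.card_filter_le _ _).trans (by simpa using hr))
    rw [← hgeom k (by omega), hvanish k hkb]
  simpa [htb] using hcoeff b

/-- If `0 < a ≤ b` and `r ≤ b`, the monomial `x₀^a x₁^b` in `ℂ[x₀,x₁]` is not a
linear combination of `r` `(a+b)`-th powers of linear forms. -/
theorem monomial_complex_no_short_waring (a b r : ℕ) (ha : 0 < a) (hab : a ≤ b)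
    (hr : r ≤ b) :
    ¬ ∃ (α : Fin r → ℂ) (L : Fin r → MvPolynomial (Fin 2) ℂ),
      (∀ i, (L i).IsHomogeneous 1) ∧
      (X 0 ^ a * X 1 ^ b : MvPolynomial (Fin 2) ℂ) = ∑ i, α i • L i ^ (a + b) :=
  monomial_complex_no_short_waring_general a b r ha hr
end

section
/- Let 0 < a ≤ b be natural numbers and let d = a + b. If r ≤ a + b − 1, then there is no way to write the monomial x₀^a x₁^b in ℝ[x₀,x₁] as a linear combination of r d-th powers of real linear forms: there exist no scalars α₁,…,α_r ∈ ℝ and linear forms L₁,…,L_r ∈ ℝ[x₀,x₁] with x₀^a x₁^b = ∑_{i=1}^{r} α_i · L_i^d. -/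
/-!
Dehomogenizing `(x₀, x₁) ↦ (X, 1)` turns a representation into `X ^ a = ∑ αᵢ (cᵢ X + eᵢ) ^ d`
in `ℝ[X]`. The apolarity pairing `⟨P, f⟩ = ∑ⱼ pⱼ fⱼ / (d choose j)` sends `X ^ a` to
`p_a / (d choose a)` and `(c X + e) ^ d` to the value at `(c, e)` of the degree-`d`
homogenization of `P`. So it suffices to find `P` with `p_a ≠ 0` whose homogenization vanishes at
the `r < d` points `(cᵢ : eᵢ)`: take `X ^ m` times the product of `X - t` over the finite slopes
`t`, of degree `< d` if one of the points is at infinity. A suitable `m` exists because a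
polynomial with only simple real roots has no two consecutive vanishing coefficients below its
degree: by Rolle its derivatives again have only simple real roots, and differentiating moves the
gap down to the constant term, where it would be a double root at `0`.
-/

open Polynomial Finset

namespace Polynomial

theorem card_roots_toFinset_derivative {f : ℝ[X]}
    (hf : f.roots.toFinset.card = f.natDegree) :
    f.derivative.roots.toFinset.card = f.derivative.natDegree ∧
      f.derivative.natDegree = f.natDegree - 1 := by
  have h₁ := card_roots_toFinset_le_derivative f
  have h₂ := (Multiset.toFinset_card_le f.derivative.roots).trans (card_roots' f.derivative)
  have h₃ := natDegree_derivative_le f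
  omega

theorem coeff_ne_zero_or_coeff_succ_ne_zero {f : ℝ[X]}
    (hf : f.roots.toFinset.card = f.natDegree) {k : ℕ} (hk : k < f.natDegree) :
    f.coeff k ≠ 0 ∨ f.coeff (k + 1) ≠ 0 := by
  induction k generalizing f with
  | zero =>
    by_contra! h
    have hX : (X - C 0) ^ 2 ∣ f := by
      rw [map_zero, sub_zero, X_pow_dvd_iff]
      intro j hj
      interval_cases j <;> simp [h]
    have hmult := (le_rootMultiplicity_iff (ne_zero_of_natDegree_gt hk)).mpr hX
    have hnodup : f.roots.Nodup := Multiset.toFinset_card_eq_card_iff_nodup.mp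
      (le_antisymm (Multiset.toFinset_card_le _) (hf ▸ card_roots' f))
    have hcount := Multiset.nodup_iff_count_le_one.mp hnodup 0
    rw [count_roots] at hcount
    omega
  | succ k ih =>
    obtain ⟨hf', hdeg⟩ := card_roots_toFinset_derivative hf
    have h := ih hf' (by omega)
    simp only [coeff_derivative, ne_eq, mul_eq_zero, not_or] at h
    exact h.imp And.left And.left

theorem exists_coeff_ne_zero_of_eval_eq_zero (T : Finset ℝ) {a n : ℕ} (ha : 0 < a)
    (han : a ≤ n) (hTn : T.card < n) :
    ∃ P : ℝ[X], P.natDegree ≤ n ∧ P.coeff a ≠ 0 ∧ ∀ t ∈ T, P.eval t = 0 := by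
  set q : ℝ[X] := ∏ t ∈ T, (X - C t)
  have hq : q.Monic := monic_prod_of_monic _ _ fun t _ => monic_X_sub_C t
  have hqdeg : q.natDegree = T.card := natDegree_finsetProd_X_sub_C_eq_card T id
  have hqroots : q.roots.toFinset.card = q.natDegree := by
    rw [roots_prod_X_sub_C, Finset.val_toFinset, hqdeg]
  obtain ⟨m, hma, hmn, hcoeff⟩ : ∃ m, m ≤ a ∧ m + T.card ≤ n ∧ q.coeff (a - m) ≠ 0 := by
    by_cases hTa : T.card ≤ a
    · refine ⟨a - T.card, by omega, by omega, ?_⟩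
      rw [Nat.sub_sub_self hTa, ← hqdeg, hq.coeff_natDegree]
      exact one_ne_zero
    · rcases coeff_ne_zero_or_coeff_succ_ne_zero hqroots (k := a - 1) (by omega) with h | h
      · exact ⟨1, ha, by omega, h⟩
      · exact ⟨0, by omega, by omega, by rwa [Nat.sub_add_cancel ha] at h⟩
  refine ⟨X ^ m * q, ?_, ?_, fun t ht => ?_⟩
  · rw [(monic_X_pow m).natDegree_mul hq, natDegree_X_pow, hqdeg]
    exact hmn
  · rwa [coeff_X_pow_mul', if_pos hma]
  · rw [eval_mul, eval_prod, Finset.prod_eq_zero ht (by simp), mul_zero]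

theorem coeff_C_mul_X_add_C_pow {R : Type*} [CommSemiring R] (c e : R) {d j : ℕ} (hj : j ≤ d) :
    ((C c * X + C e) ^ d).coeff j = d.choose j * c ^ j * e ^ (d - j) := by
  have hterm (k : ℕ) : (C c * X) ^ k * C e ^ (d - k) * (d.choose k : R[X]) =
      C (d.choose k * c ^ k * e ^ (d - k)) * X ^ k := by
    simp only [map_mul, map_pow, map_natCast]
    ring
  simp_rw [add_pow, finsetSum_coeff, hterm, coeff_C_mul_X_pow]
  rw [Finset.sum_ite_eq, if_pos (mem_range.mpr (by omega))]

theorem eval_homogenize_of_natDegree_lt {R : Type*} [CommSemiring R] {p : R[X]} {n : ℕ}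
    (hp : p.natDegree < n) {x : Fin 2 → R} (hx : x 1 = 0) :
    MvPolynomial.eval x (p.homogenize n) = 0 := by
  obtain ⟨m, rfl⟩ : ∃ m, n = m + 1 := ⟨n - 1, by omega⟩
  have h := homogenize_mul p 1 (n := 1) (Nat.lt_succ_iff.mp hp) (by simp)
  rw [mul_one, homogenize_one] at h
  rw [h, map_mul, map_pow, MvPolynomial.eval_X, hx, pow_one, mul_zero]

section Apolarity

variable {K : Type*} [Field K]

/-- The apolarity pairing of binary forms of degree `d`, written in the dehomogenized
coordinate. -/
noncomputable def apolarPairing (d : ℕ) (P : K[X]) : K[X] →ₗ[K] K :=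
  ∑ j ∈ range (d + 1), (P.coeff j / d.choose j) • lcoeff K j

theorem apolarPairing_apply (d : ℕ) (P f : K[X]) :
    apolarPairing d P f = ∑ j ∈ range (d + 1), P.coeff j / d.choose j * f.coeff j := by
  simp [apolarPairing]

theorem apolarPairing_X_pow (P : K[X]) {a d : ℕ} (had : a ≤ d) :
    apolarPairing d P (X ^ a) = P.coeff a / d.choose a := by
  rw [apolarPairing_apply, Finset.sum_eq_single_of_mem a (mem_range.mpr (by omega))]
  · simp
  · intro j _ hja
    simp [coeff_X_pow, hja]

theorem apolarPairing_C_mul_X_add_C_pow [CharZero K] (d : ℕ) (P : K[X]) (c e : K) :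
    apolarPairing d P ((C c * X + C e) ^ d) = MvPolynomial.eval ![c, e] (P.homogenize d) := by
  rw [apolarPairing_apply, homogenize, map_sum,
    Finset.Nat.sum_antidiagonal_eq_sum_range_succ_mk]
  refine Finset.sum_congr rfl fun j hj => ?_
  have hjd : j ≤ d := Nat.lt_succ_iff.mp (Finset.mem_range.mp hj)
  have hchoose : (d.choose j : K) ≠ 0 := Nat.cast_ne_zero.mpr (Nat.choose_pos hjd).ne'
  rw [coeff_C_mul_X_add_C_pow c e hjd, MvPolynomial.eval_monomial]
  field_simp
  simp [Finsupp.prod_fintype, mul_assoc]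

end Apolarity

theorem exists_coeff_ne_zero_of_eval_homogenize_eq_zero {a d r : ℕ} (ha : 0 < a) (had : a < d)
    (hrd : r < d) (c e : Fin r → ℝ) :
    ∃ P : ℝ[X], P.coeff a ≠ 0 ∧ ∀ i, MvPolynomial.eval ![c i, e i] (P.homogenize d) = 0 := by
  classical
  set affine := univ.filter fun i => e i ≠ 0
  set T := affine.image fun i => c i / e i
  have hT : T.card ≤ affine.card := card_image_le
  obtain ⟨n, han, hnd, hTn, hinf⟩ :
      ∃ n, a ≤ n ∧ n ≤ d ∧ T.card < n ∧ ((∃ i, e i = 0) → n < d) := by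
    by_cases h : ∃ i, e i = 0
    · obtain ⟨i, hi⟩ := h
      have : affine.card < r := by
        simpa using card_lt_card (filter_ssubset.mpr ⟨i, mem_univ i, not_not.mpr hi⟩)
      exact ⟨d - 1, by omega, by omega, by omega, fun _ => by omega⟩
    · have : affine.card ≤ r := by simpa using card_filter_le univ fun i => e i ≠ 0
      exact ⟨d, had.le, le_rfl, by omega, fun h' => absurd h' h⟩
  obtain ⟨P, hPn, hPa, hPT⟩ := exists_coeff_ne_zero_of_eval_eq_zero T ha han hTn
  refine ⟨P, hPa, fun i => ?_⟩
  by_cases hi : e i = 0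
  · exact eval_homogenize_of_natDegree_lt (hPn.trans_lt (hinf ⟨i, hi⟩)) hi
  · rw [eval_homogenize (hPn.trans hnd) _ hi]
    simp [hPT _ (mem_image_of_mem _ (mem_filter.mpr ⟨mem_univ i, hi⟩))]

theorem X_pow_ne_sum_smul_C_mul_X_add_C_pow {a d r : ℕ} (ha : 0 < a) (had : a < d)
    (hrd : r < d) (α c e : Fin r → ℝ) :
    (X ^ a : ℝ[X]) ≠ ∑ i, α i • (C (c i) * X + C (e i)) ^ d := by
  intro h
  obtain ⟨P, hPa, hPv⟩ := exists_coeff_ne_zero_of_eval_homogenize_eq_zero ha had hrd c e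
  have hpair := congrArg (apolarPairing d P) h
  simp only [apolarPairing_X_pow P had.le, map_sum, map_smul, apolarPairing_C_mul_X_add_C_pow,
    hPv, smul_zero, sum_const_zero] at hpair
  exact hPa ((div_eq_zero_iff.mp hpair).resolve_right
    (Nat.cast_ne_zero.mpr (Nat.choose_pos had.le).ne'))

end Polynomial

theorem MvPolynomial.IsHomogeneous.exists_aeval_eq_C_mul_X_add_C {R : Type*} [CommSemiring R]
    {L : MvPolynomial (Fin 2) R} (hL : L.IsHomogeneous 1) :
    ∃ c e : R, MvPolynomial.aeval ![(Polynomial.X : R[X]), 1] L =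
      Polynomial.C c * Polynomial.X + Polynomial.C e := by
  rw [← mem_homogeneousSubmodule, homogeneousSubmodule_one_eq_span_X,
    Submodule.mem_span_range_iff_exists_fun] at hL
  obtain ⟨w, rfl⟩ := hL
  exact ⟨w 0, w 1, by simp [Fin.sum_univ_two, Algebra.smul_def]⟩

open MvPolynomial

/-- If `0 < a ≤ b` and `r ≤ a + b - 1`, the monomial `x₀^a x₁^b` in `ℝ[x₀,x₁]`
is not a linear combination of `r` `(a+b)`-th powers of real linear forms. -/
theorem monomial_real_no_short_waring (a b r : ℕ) (ha : 0 < a) (hab : a ≤ b)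
    (hr : r ≤ a + b - 1) :
    ¬ ∃ (α : Fin r → ℝ) (L : Fin r → MvPolynomial (Fin 2) ℝ),
      (∀ i, (L i).IsHomogeneous 1) ∧
      (X 0 ^ a * X 1 ^ b : MvPolynomial (Fin 2) ℝ) = ∑ i, α i • L i ^ (a + b) := by
  rintro ⟨α, L, hL, h⟩
  choose c e hce using fun i => (hL i).exists_aeval_eq_C_mul_X_add_C
  refine Polynomial.X_pow_ne_sum_smul_C_mul_X_add_C_pow (d := a + b) ha (by omega) (by omega)
    α c e ?_
  simpa [hce] using congrArg (MvPolynomial.aeval ![(Polynomial.X : ℝ[X]), 1]) h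
end

section
/- Let 0 < a ≤ b be natural numbers and let d = a + b. Then the monomial x₀^a x₁^b in ℝ[x₀,x₁] admits a real Waring expansion with d summands: there exist signs α₁,…,α_d ∈ {1, −1} and pairwise linearly independent linear forms L₁,…,L_d ∈ ℝ[x₀,x₁] such that x₀^a x₁^b = ∑_{i=1}^{d} α_i · L_i^d. -/
/-!
A linear form `x₀ + t x₁` is a node `t ∈ ℝ`, and `x₁` is the node `∞`. Comparing coefficients,
for nodes `s` with `#s = d = a + b` the identity `x₀^a x₁^b = ∑ γ_t (x₀ + t x₁)^d` says that the
moments `∑ γ_t t^j` (`j ≤ d`) are `δ_{jb} / C(d, b)`. For `j < d` this is solved by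
`γ_t = C(d, b)⁻¹ · [X^b] ℓ_t`, with `ℓ_t` the Lagrange basis polynomial of `t`, and then the top
moment is `-[X^b] P` for the nodal polynomial `P = ∏ (X - t)`. So it suffices that `P` has no `X^b`
term, and then `γ_t ≠ 0` as long as every `P / (X - t)` has an `X^b` term.

Nodes `±1, …, ±m`, with `0` added if needed, give `P = X^ε ∏ (X² - k²)`. Up to `deg P`, its
coefficients vanish exactly in the parity opposite to `deg P`: the others are, up to sign,
elementary symmetric functions of the positive numbers `k²`. If `a` is odd, `d` such nodes do the
job. If `a` is even, parity forces `d - 1` finite nodes, and `∞` is added: the form `x₁^d` absorbs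
the top moment. Finally `γ = sign γ · |γ|`, and `|γ|^(1/d)` is moved inside the linear form.
-/

namespace RealWaring

open Finset

section LinearForms

open MvPolynomial

noncomputable def linForm (v : ℝ × ℝ) : MvPolynomial (Fin 2) ℝ := C v.1 * X 0 + C v.2 * X 1

lemma isHomogeneous_linForm (v : ℝ × ℝ) : (linForm v).IsHomogeneous 1 :=
  ((isHomogeneous_X ℝ 0).C_mul _).add ((isHomogeneous_X ℝ 1).C_mul _)

lemma smul_linForm (c : ℝ) (v : ℝ × ℝ) : c • linForm v = linForm (c • v) := by
  simp only [linForm, smul_eq_C_mul, Prod.smul_fst, Prod.smul_snd, smul_eq_mul, map_mul]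
  ring

lemma linForm_injective : Function.Injective linForm := fun v w h => by
  have hcoeff (k : Fin 2) := congrArg (coeff (Finsupp.single k 1)) h
  exact Prod.ext (by simpa [linForm, coeff_X, Finsupp.single_eq_single_iff] using hcoeff 0)
    (by simpa [linForm, coeff_X, Finsupp.single_eq_single_iff] using hcoeff 1)

lemma linForm_pow (v : ℝ × ℝ) (d : ℕ) :
    linForm v ^ d = ∑ k ∈ range (d + 1),
      (v.1 ^ k * v.2 ^ (d - k) * d.choose k) • (X 0 ^ k * X 1 ^ (d - k)) := by
  rw [linForm, add_pow]
  refine sum_congr rfl fun k _ => ?_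
  simp only [mul_pow, ← map_pow, smul_eq_C_mul, map_mul, map_natCast]
  ring

lemma sum_smul_linForm_pow_eq_monomial (V : Finset (ℝ × ℝ)) (γ : ℝ × ℝ → ℝ) {a d : ℕ}
    (ha : a ≤ d) (hmom : ∀ k ≤ d, ∑ v ∈ V, γ v * (v.1 ^ k * v.2 ^ (d - k)) =
      if k = a then ((d.choose a : ℕ) : ℝ)⁻¹ else 0) :
    ∑ v ∈ V, γ v • linForm v ^ d = X 0 ^ a * X 1 ^ (d - a) := by
  have hcoeff (k : ℕ) (hk : k ∈ range (d + 1)) :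
      ∑ v ∈ V, γ v * (v.1 ^ k * v.2 ^ (d - k) * d.choose k) = if k = a then 1 else 0 := by
    simp_rw [← mul_assoc, ← sum_mul, mul_assoc _ (_ ^ k),
      hmom k (Nat.lt_succ_iff.1 (mem_range.1 hk))]
    split_ifs with hka
    · subst hka
      exact inv_mul_cancel₀ (by exact_mod_cast (Nat.choose_pos ha).ne')
    · exact zero_mul _
  simp_rw [linForm_pow, smul_sum, smul_smul]
  rw [sum_comm]
  simp_rw [← sum_smul]
  rw [sum_congr rfl fun k hk => by rw [hcoeff k hk, ite_smul, one_smul, zero_smul],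
    sum_ite_eq', if_pos (mem_range.2 (Nat.lt_succ_of_le ha))]

def HasSignedWaringExpansion (F : MvPolynomial (Fin 2) ℝ) (r d : ℕ) : Prop :=
  ∃ (α : Fin r → ℝ) (L : Fin r → MvPolynomial (Fin 2) ℝ),
    (∀ i, α i = 1 ∨ α i = -1) ∧
    (∀ i, (L i).IsHomogeneous 1) ∧
    (∀ i j, i ≠ j → ∀ c : ℝ, L i ≠ c • L j) ∧
    F = ∑ i, α i • L i ^ d

lemma hasSignedWaringExpansion_sum (V : Finset (ℝ × ℝ)) (γ : ℝ × ℝ → ℝ)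
    (hγ : ∀ v ∈ V, γ v ≠ 0) (hV : ∀ v ∈ V, ∀ w ∈ V, v ≠ w → ∀ c : ℝ, v ≠ c • w)
    {d : ℕ} (hd : d ≠ 0) :
    HasSignedWaringExpansion (∑ v ∈ V, γ v • linForm v ^ d) V.card d := by
  set e := V.equivFin.symm
  set β : ℝ × ℝ → ℝ := fun v => |γ v| ^ (d⁻¹ : ℝ)
  have hβ (i) : 0 < β (e i) := Real.rpow_pos_of_pos (abs_pos.2 (hγ _ (e i).2)) _
  refine ⟨fun i => SignType.sign (γ (e i)), fun i => linForm (β (e i) • (e i : ℝ × ℝ)),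
    fun i => ?_, fun i => isHomogeneous_linForm _, fun i j hij c hc => ?_, ?_⟩
  · rcases (hγ _ (e i).2).lt_or_gt with h | h
    · simp [sign_neg h]
    · simp [sign_pos h]
  · rw [smul_linForm, smul_smul] at hc
    refine hV _ (e i).2 _ (e j).2 (fun h => hij (e.injective (Subtype.ext h)))
      ((β (e i))⁻¹ * (c * β (e j))) ?_
    rw [mul_smul, ← linForm_injective hc, inv_smul_smul₀ (hβ i).ne']
  · rw [← sum_coe_sort V, ← e.sum_comp]
    refine sum_congr rfl fun i _ => ?_
    dsimp only
    rw [← smul_linForm, smul_pow, smul_smul, Real.rpow_inv_natCast_pow (abs_nonneg _) hd,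
      sign_mul_abs]

end LinearForms

section Interpolation

open Polynomial

variable {F : Type*} [Field F] [DecidableEq F] {s : Finset F}

lemma sum_coeff_basis_mul_eval {f : F[X]} (hf : f.degree < #s) (b : ℕ) :
    ∑ t ∈ s, (Lagrange.basis s id t).coeff b * f.eval t = f.coeff b := by
  conv_rhs => rw [Lagrange.eq_interpolate (Set.injOn_id _) hf, Lagrange.interpolate_apply,
    finsetSum_coeff]
  exact sum_congr rfl fun t _ => by rw [coeff_C_mul, mul_comm, id]

lemma sum_coeff_basis_mul_pow_of_lt {j : ℕ} (hj : j < #s) (b : ℕ) :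
    ∑ t ∈ s, (Lagrange.basis s id t).coeff b * t ^ j = if b = j then 1 else 0 := by
  simpa [coeff_X_pow] using
    sum_coeff_basis_mul_eval (f := X ^ j) (by rw [degree_X_pow]; exact_mod_cast hj) b

omit [DecidableEq F] in
lemma degree_X_pow_card_sub_nodal_lt (s : Finset F) :
    (X ^ #s - Lagrange.nodal s id).degree < (#s : WithBot ℕ) := by
  have h := degree_sub_lt_left (p := (X : F[X]) ^ #s) (q := Lagrange.nodal s id)
    (by rw [degree_X_pow, Lagrange.degree_nodal]) (pow_ne_zero _ X_ne_zero)
    (by rw [leadingCoeff_X_pow, Lagrange.nodal_monic.leadingCoeff])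
  rwa [degree_X_pow] at h

lemma sum_coeff_basis_mul_pow_card {b : ℕ} (hb : b < #s) :
    ∑ t ∈ s, (Lagrange.basis s id t).coeff b * t ^ #s = -(Lagrange.nodal s id).coeff b := by
  have h := sum_coeff_basis_mul_eval (degree_X_pow_card_sub_nodal_lt s) b
  rw [coeff_sub, coeff_X_pow, if_neg hb.ne, zero_sub] at h
  rw [← h]
  refine sum_congr rfl fun t ht => ?_
  have hPt : eval t (Lagrange.nodal s id) = 0 := Lagrange.eval_nodal_at_node (v := id) ht
  rw [eval_sub, eval_X_pow, hPt, sub_zero]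

lemma sum_coeff_basis_mul_pow_card_add_one {b : ℕ} (hb : b < #s)
    (hP : (Lagrange.nodal s id).coeff (#s - 1) = 0) :
    ∑ t ∈ s, (Lagrange.basis s id t).coeff b * t ^ (#s + 1) =
      -(X * Lagrange.nodal s id).coeff b := by
  have hg := (degree_lt_iff_coeff_zero _ _).1 (degree_X_pow_card_sub_nodal_lt s)
  have hXg : (X * (X ^ #s - Lagrange.nodal s id)).degree < (#s : WithBot ℕ) := by
    refine (degree_lt_iff_coeff_zero _ _).2 fun m hm => ?_
    obtain ⟨m, rfl⟩ : ∃ m', m = m' + 1 := ⟨m - 1, by omega⟩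
    rw [coeff_X_mul]
    rcases (show #s - 1 = m ∨ #s ≤ m by omega) with rfl | hm
    · rw [coeff_sub, coeff_X_pow, if_neg (by omega), hP, sub_zero]
    · exact hg m hm
  have h := sum_coeff_basis_mul_eval hXg b
  rw [mul_sub, ← pow_succ', coeff_sub, coeff_X_pow, if_neg (by omega), zero_sub] at h
  rw [← h]
  refine sum_congr rfl fun t ht => ?_
  have hPt : eval t (Lagrange.nodal s id) = 0 := Lagrange.eval_nodal_at_node (v := id) ht
  rw [eval_sub, eval_mul, eval_X_pow, eval_X, hPt, mul_zero, sub_zero]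

lemma coeff_basis_ne_zero {t : F} (ht : t ∈ s) {b : ℕ}
    (h : (Lagrange.nodal (s.erase t) id).coeff b ≠ 0) : (Lagrange.basis s id t).coeff b ≠ 0 := by
  rw [Lagrange.basis_eq_prod_sub_inv_mul_nodal_div ht, ← Lagrange.nodal_erase_eq_nodal_div ht,
    coeff_C_mul]
  exact mul_ne_zero (Lagrange.nodalWeight_ne_zero (Set.injOn_id _) ht) h

end Interpolation

section ParitySupport

open Polynomial

variable {R : Type*} [Semiring R]

def HasParitySupport (p : R[X]) (n : ℕ) : Prop :=
  ∀ k, p.coeff k ≠ 0 ↔ k ≤ n ∧ Even (n + k)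

variable {p : R[X]} {n k : ℕ}

lemma HasParitySupport.coeff_eq_zero (hp : HasParitySupport p n) (hk : ¬Even (n + k)) :
    p.coeff k = 0 :=
  not_not.1 fun h => hk ((hp k).1 h).2

lemma HasParitySupport.coeff_ne_zero (hp : HasParitySupport p n) (hkn : k ≤ n)
    (hk : Even (n + k)) : p.coeff k ≠ 0 :=
  (hp k).2 ⟨hkn, hk⟩

lemma HasParitySupport.X_mul (hp : HasParitySupport p n) (hn : Even n) :
    HasParitySupport (X * p) (n + 1) := by
  rintro (_ | k)
  · simp only [coeff_X_mul_zero, ne_eq, not_true_eq_false, false_iff, not_and]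
    intro _ h
    simp only [Nat.even_iff] at h hn
    omega
  · rw [coeff_X_mul, hp k]
    simp only [Nat.even_iff]
    omega

lemma HasParitySupport.coeff_X_add_C_mul_ne_zero (hp : HasParitySupport p n) (w : R)
    (hk : ¬Even (n + k)) (hk₁ : 1 ≤ k) (hkn : k ≤ n + 1) : ((X + C w) * p).coeff k ≠ 0 := by
  obtain ⟨j, rfl⟩ : ∃ j, k = j + 1 := ⟨k - 1, by omega⟩
  rw [add_mul, coeff_add, coeff_X_mul, coeff_C_mul, hp.coeff_eq_zero hk, mul_zero, add_zero]
  refine hp.coeff_ne_zero (by omega) ?_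
  simp only [Nat.even_iff] at hk ⊢
  omega

end ParitySupport

section SymmetricNodes

open Polynomial
open scoped Pointwise

lemma coeff_prod_X_sub_C_ne_zero {K ι : Type*} [CommRing K] [LinearOrder K]
    [IsStrictOrderedRing K] (T : Finset ι) {r : ι → K} (hr : ∀ i ∈ T, 0 < r i) {k : ℕ}
    (hk : k ≤ #T) : (∏ i ∈ T, (X - C (r i))).coeff k ≠ 0 := by
  simp_rw [sub_eq_add_neg, ← map_neg C]
  rw [prod_X_add_C_coeff T _ hk,
    sum_congr rfl fun t ht => by rw [prod_neg, (mem_powersetCard.1 ht).2], ← mul_sum]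
  refine mul_ne_zero (pow_ne_zero _ (by norm_num)) (sum_pos (fun t ht => ?_)
    (powersetCard_nonempty.2 (Nat.sub_le _ _))).ne'
  exact prod_pos fun i hi => hr i ((mem_powersetCard.1 ht).1 hi)

lemma hasParitySupport_prod_X_sq_sub (T : Finset ℝ) (hT : ∀ c ∈ T, 0 < c) :
    HasParitySupport (∏ c ∈ T, (X ^ 2 - C (c ^ 2))) (2 * #T) := by
  have hexpand : ∏ c ∈ T, (X ^ 2 - C (c ^ 2)) = expand ℝ 2 (∏ c ∈ T, (X - C (c ^ 2))) := by
    simp [map_prod]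
  intro k
  rw [hexpand, coeff_expand two_pos]
  split_ifs with h2
  · obtain ⟨j, rfl⟩ := h2
    rw [Nat.mul_div_cancel_left j two_pos]
    constructor
    · intro h
      refine ⟨?_, by simp [← mul_add]⟩
      by_contra! hj
      exact h (coeff_eq_zero_of_natDegree_lt (by rw [natDegree_finsetProd_X_sub_C_eq_card]; omega))
    · exact fun h => coeff_prod_X_sub_C_ne_zero T (fun c hc => pow_pos (hT c hc) 2) (by omega)
  · simp only [ne_eq, not_true_eq_false, false_iff, not_and, Nat.even_iff]
    omega

variable {T : Finset ℝ}

lemma disjoint_neg_self (hT : ∀ c ∈ T, 0 < c) : Disjoint T (-T) :=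
  disjoint_left.2 fun c hc hc' => by linarith [hT c hc, hT _ (mem_neg'.1 hc')]

lemma card_union_neg (hT : ∀ c ∈ T, 0 < c) : #(T ∪ -T) = 2 * #T := by
  rw [card_union_of_disjoint (disjoint_neg_self hT), card_neg, two_mul]

lemma nodal_union_neg (hT : ∀ c ∈ T, 0 < c) :
    Lagrange.nodal (T ∪ -T) id = ∏ c ∈ T, (X ^ 2 - C (c ^ 2)) := by
  rw [Lagrange.nodal, prod_union (disjoint_neg_self hT), prod_neg_index, ← prod_mul_distrib]
  refine prod_congr rfl fun c _ => ?_
  simp only [id, map_neg, map_pow]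
  ring

lemma exists_nodal_erase_union_neg (hT : ∀ c ∈ T, 0 < c) {u : ℝ} (hu : u ∈ T ∪ -T) :
    ∃ p : ℝ[X], HasParitySupport p (2 * #T - 2) ∧
      Lagrange.nodal ((T ∪ -T).erase u) id = (X + C u) * p := by
  have hu' : |u| ∈ T := by
    rcases mem_union.1 hu with hu | hu
    · rwa [abs_of_pos (hT u hu)]
    · rw [abs_of_neg (neg_pos.1 (hT _ (mem_neg'.1 hu)))]; exact mem_neg'.1 hu
  refine ⟨∏ c ∈ T.erase |u|, (X ^ 2 - C (c ^ 2)), ?_, ?_⟩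
  · rw [← card_erase_add_one hu', mul_add_one, Nat.add_sub_cancel]
    exact hasParitySupport_prod_X_sq_sub _ fun c hc => hT c (mem_of_mem_erase hc)
  · refine mul_left_cancel₀ (X_sub_C_ne_zero u) ?_
    rw [show (X - C u) * _ = _ from (Lagrange.nodal_eq_mul_nodal_erase (v := id) hu).symm,
      nodal_union_neg hT,
      ← mul_prod_erase _ _ hu', sq_abs, ← mul_assoc, map_pow]
    ring

lemma exists_nodes_hasParitySupport_nodal (n : ℕ) :
    ∃ s : Finset ℝ, #s = n ∧ HasParitySupport (Lagrange.nodal s id) n ∧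
    ∀ u ∈ s, ∀ k, ¬Even (n + k) → 1 ≤ k → k < n → (Lagrange.nodal (s.erase u) id).coeff k ≠ 0 := by
  obtain ⟨m, hm⟩ := Nat.even_or_odd' n
  set T : Finset ℝ := (Icc 1 m).image (↑)
  have hT : ∀ c ∈ T, 0 < c := by
    simp only [T, mem_image, mem_Icc, forall_exists_index, and_imp]
    rintro _ k hk - rfl
    exact_mod_cast hk
  have hcard : #T = m := by
    rw [card_image_of_injective _ Nat.cast_injective, Nat.card_Icc, Nat.add_sub_cancel]
  have hsymm : HasParitySupport (Lagrange.nodal (T ∪ -T) id) (2 * m) := by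
    rw [nodal_union_neg hT, ← hcard]
    exact hasParitySupport_prod_X_sq_sub T hT
  rcases hm with rfl | rfl
  · refine ⟨T ∪ -T, by rw [card_union_neg hT, hcard], hsymm, fun u hu k hk hk₁ hkn => ?_⟩
    obtain ⟨p, hp, hnodal⟩ := exists_nodal_erase_union_neg hT hu
    rw [hnodal]
    refine hp.coeff_X_add_C_mul_ne_zero u ?_ hk₁ (by omega)
    simp only [Nat.even_iff] at hk ⊢
    omega
  · have h0 : (0 : ℝ) ∉ T ∪ -T := fun h => (hT 0 (by simpa using h)).false
    refine ⟨insert 0 (T ∪ -T), by rw [card_insert_of_notMem h0, card_union_neg hT, hcard], ?_,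
      fun u hu k hk hk₁ hkn => ?_⟩
    · rw [Lagrange.nodal_insert_eq_nodal h0, id, map_zero, sub_zero]
      exact hsymm.X_mul (even_two_mul m)
    rcases eq_or_ne u 0 with rfl | hu0
    · rw [erase_insert h0]
      refine hsymm.coeff_ne_zero (by omega) ?_
      simp only [Nat.even_iff] at hk ⊢
      omega
    · have hu' : u ∈ T ∪ -T := (mem_insert.1 hu).resolve_left hu0
      obtain ⟨p, hp, hnodal⟩ := exists_nodal_erase_union_neg hT hu'
      rw [erase_insert_of_ne hu0.symm, Lagrange.nodal_insert_eq_nodal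
        (fun h => h0 (mem_of_mem_erase h)), hnodal, id, map_zero, sub_zero, mul_left_comm]
      refine (hp.X_mul ?_).coeff_X_add_C_mul_ne_zero u ?_ hk₁ (by omega)
      all_goals simp only [Nat.even_iff] at hk ⊢; omega

end SymmetricNodes

section Expansions

open MvPolynomial

lemma ne_smul_of_mem_insert_map_sectR (s : Finset ℝ) :
    ∀ v ∈ insert ((0 : ℝ), (1 : ℝ)) (s.map (.sectR (1 : ℝ) ℝ)),
      ∀ w ∈ insert ((0 : ℝ), (1 : ℝ)) (s.map (.sectR (1 : ℝ) ℝ)), v ≠ w → ∀ c : ℝ, v ≠ c • w := by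
  simp only [mem_insert, mem_map, Function.Embedding.sectR_apply]
  rintro v (rfl | ⟨t, -, rfl⟩) w (rfl | ⟨t', -, rfl⟩) hvw c h <;>
    simp only [Prod.ext_iff, Prod.smul_mk, smul_eq_mul] at h
  · exact hvw rfl
  · rw [mul_one] at h
    simp [← h.1] at h
  · simp at h
  · exact hvw (by rw [h.2, mul_one] at *; rw [← h.1, one_mul])

lemma hasSignedWaringExpansion_of_nodes {a b : ℕ} (ha : 0 < a) {s : Finset ℝ} (hs : #s = a + b)
    (hP : (Lagrange.nodal s id).coeff b = 0)
    (hQ : ∀ u ∈ s, (Lagrange.nodal (s.erase u) id).coeff b ≠ 0) :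
    HasSignedWaringExpansion (X 0 ^ a * X 1 ^ b) (a + b) (a + b) := by
  set κ : ℝ := ((a + b).choose a : ℝ)⁻¹
  set γ : ℝ × ℝ → ℝ := fun v => κ * (Lagrange.basis s id v.2).coeff b
  have hmom (k : ℕ) (hk : k ≤ a + b) : ∑ v ∈ s.map (.sectR (1 : ℝ) ℝ),
      γ v * (v.1 ^ k * v.2 ^ (a + b - k)) = if k = a then κ else 0 := by
    simp only [sum_map, Function.Embedding.sectR_apply, one_pow, one_mul, γ, mul_assoc, ← mul_sum]
    rcases Nat.eq_zero_or_pos k with rfl | hk0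
    · rw [Nat.sub_zero, ← hs, sum_coeff_basis_mul_pow_card (by omega), hP, neg_zero, mul_zero,
        if_neg ha.ne]
    · rw [sum_coeff_basis_mul_pow_of_lt (by omega)]
      split_ifs <;> first | omega | simp
  have h := hasSignedWaringExpansion_sum (s.map (.sectR (1 : ℝ) ℝ)) γ ?_
    (fun v hv w hw => ne_smul_of_mem_insert_map_sectR s v (mem_insert_of_mem hv) w
      (mem_insert_of_mem hw)) (d := a + b) (by omega)
  · rwa [card_map, hs, sum_smul_linForm_pow_eq_monomial _ _ (Nat.le_add_right a b) hmom,
      Nat.add_sub_cancel_left] at h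
  · simp only [mem_map, Function.Embedding.sectR_apply, forall_exists_index, and_imp]
    rintro _ t ht rfl
    exact mul_ne_zero (inv_ne_zero (by exact_mod_cast (Nat.choose_pos (by omega)).ne'))
      (coeff_basis_ne_zero ht (hQ t ht))

lemma hasSignedWaringExpansion_of_nodes_and_infty {a b : ℕ} (ha : 2 ≤ a) {s : Finset ℝ}
    (hs : #s + 1 = a + b) (hP : (Lagrange.nodal s id).coeff b = 0)
    (hPtop : (Lagrange.nodal s id).coeff (#s - 1) = 0)
    (hXP : (Polynomial.X * Lagrange.nodal s id).coeff b ≠ 0)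
    (hQ : ∀ u ∈ s, (Lagrange.nodal (s.erase u) id).coeff b ≠ 0) :
    HasSignedWaringExpansion (X 0 ^ a * X 1 ^ b) (a + b) (a + b) := by
  set κ : ℝ := ((a + b).choose a : ℝ)⁻¹
  set γ : ℝ × ℝ → ℝ := fun v => κ *
    if v = (0, 1) then (Polynomial.X * Lagrange.nodal s id).coeff b
    else (Lagrange.basis s id v.2).coeff b
  have hnotMem : ((0 : ℝ), (1 : ℝ)) ∉ s.map (.sectR (1 : ℝ) ℝ) := by simp
  have hmom (k : ℕ) (hk : k ≤ a + b) : ∑ v ∈ insert (0, 1) (s.map (.sectR (1 : ℝ) ℝ)),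
      γ v * (v.1 ^ k * v.2 ^ (a + b - k)) = if k = a then κ else 0 := by
    rw [sum_insert hnotMem]
    simp only [sum_map, Function.Embedding.sectR_apply, one_pow, one_mul, γ, mul_assoc, ← mul_sum,
      if_pos, Prod.mk.injEq, one_ne_zero, false_and, if_false]
    rcases (show k = 0 ∨ k = 1 ∨ 2 ≤ k by omega) with rfl | rfl | hk2
    · rw [Nat.sub_zero, ← hs, sum_coeff_basis_mul_pow_card_add_one (by omega) hPtop,
        if_neg (by omega)]
      ring
    · rw [show a + b - 1 = #s by omega, sum_coeff_basis_mul_pow_card (by omega), hP,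
        if_neg (by omega)]
      ring
    · rw [sum_coeff_basis_mul_pow_of_lt (by omega), zero_pow (by omega)]
      split_ifs <;> first | omega | simp
  have h := hasSignedWaringExpansion_sum (insert (0, 1) (s.map (.sectR (1 : ℝ) ℝ))) γ ?_
    (ne_smul_of_mem_insert_map_sectR s) (d := a + b) (by omega)
  · rwa [card_insert_of_notMem hnotMem, card_map, hs,
      sum_smul_linForm_pow_eq_monomial _ _ (Nat.le_add_right a b) hmom,
      Nat.add_sub_cancel_left] at h
  · have hκ : κ ≠ 0 := inv_ne_zero (by exact_mod_cast (Nat.choose_pos (by omega)).ne')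
    simp only [mem_insert, mem_map, Function.Embedding.sectR_apply]
    rintro _ (rfl | ⟨t, ht, rfl⟩)
    · simpa [γ] using ⟨hκ, hXP⟩
    · simpa [γ] using ⟨hκ, coeff_basis_ne_zero ht (hQ t ht)⟩

lemma hasSignedWaringExpansion_monomial_of_odd {a b : ℕ} (ha : Odd a) (hb : 0 < b) :
    HasSignedWaringExpansion (X 0 ^ a * X 1 ^ b) (a + b) (a + b) := by
  obtain ⟨s, hs, hP, hQ⟩ := exists_nodes_hasParitySupport_nodal (a + b)
  have hab : ¬Even (a + b + b) := by
    simp only [Nat.even_iff, Nat.odd_iff] at ha ⊢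
    omega
  exact hasSignedWaringExpansion_of_nodes ha.pos hs (hP.coeff_eq_zero hab)
    fun u hu => hQ u hu b hab hb (by have := ha.pos; omega)

lemma hasSignedWaringExpansion_monomial_of_even {a b : ℕ} (ha : Even a) (ha₀ : 0 < a)
    (hb : 0 < b) : HasSignedWaringExpansion (X 0 ^ a * X 1 ^ b) (a + b) (a + b) := by
  obtain ⟨s, hs, hP, hQ⟩ := exists_nodes_hasParitySupport_nodal (a + b - 1)
  obtain ⟨b, rfl⟩ : ∃ b', b = b' + 1 := ⟨b - 1, by omega⟩
  rw [Nat.even_iff] at ha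
  have hodd : ¬Even (a + (b + 1) - 1 + (b + 1)) := by rw [Nat.even_iff]; omega
  have htop : ¬Even (a + (b + 1) - 1 + (#s - 1)) := by rw [Nat.even_iff]; omega
  have hXP : (Polynomial.X * Lagrange.nodal s id).coeff (b + 1) ≠ 0 := by
    rw [Polynomial.coeff_X_mul]
    exact hP.coeff_ne_zero (by omega) (by rw [Nat.even_iff]; omega)
  exact hasSignedWaringExpansion_of_nodes_and_infty (by omega) (by omega) (hP.coeff_eq_zero hodd)
    (hP.coeff_eq_zero htop) hXP fun u hu => hQ u hu _ hodd hb (by omega)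

end Expansions

end RealWaring

open MvPolynomial

/-- Any monomial `x₀^a x₁^b` with `0 < a ≤ b` in `ℝ[x₀,x₁]` admits a real Waring
expansion with `d = a + b` summands: signs `αᵢ ∈ {1, -1}` and pairwise linearly
independent real linear forms `Lᵢ` with `x₀^a x₁^b = ∑ αᵢ Lᵢ^d`. -/
theorem monomial_real_waring_expansion (a b : ℕ) (ha : 0 < a) (hab : a ≤ b) :
    ∃ (α : Fin (a + b) → ℝ) (L : Fin (a + b) → MvPolynomial (Fin 2) ℝ),
      (∀ i, α i = 1 ∨ α i = -1) ∧
      (∀ i, (L i).IsHomogeneous 1) ∧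
      (∀ i j, i ≠ j → ∀ c : ℝ, L i ≠ c • L j) ∧
      (X 0 ^ a * X 1 ^ b : MvPolynomial (Fin 2) ℝ) = ∑ i, α i • L i ^ (a + b) := by
  rcases Nat.even_or_odd a with h | h
  · exact RealWaring.hasSignedWaringExpansion_monomial_of_even h ha (ha.trans_le hab)
  · exact RealWaring.hasSignedWaringExpansion_monomial_of_odd h (ha.trans_le hab)
end

section
/- Let F ∈ ℝ[x] be a univariate polynomial of degree d, with coefficients written F(x) = c_d x^d + ⋯ + c_1 x + c_0. If there exists an index i with 1 ≤ i ≤ d such that c_i = 0 and c_{i−1} = 0, then F does not have d distinct real roots; that is, the set of real roots of F has cardinality strictly less than d. -/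
open Polynomial

/-- If a real polynomial `F` of degree `d` has two consecutive vanishing
coefficients `c_i = c_{i-1} = 0` for some `1 ≤ i ≤ d`, then `F` does not have
`d` distinct real roots. -/
theorem not_all_real_roots_of_two_consecutive_zero_coeffs
    (F : Polynomial ℝ) (d : ℕ) (hd : F.natDegree = d)
    (i : ℕ) (h1 : 1 ≤ i) (hid : i ≤ d)
    (hci : F.coeff i = 0) (hci1 : F.coeff (i - 1) = 0) :
    F.roots.toFinset.card < d := by
  by_contra hlt
  push_neg at hlt
  have hF0 : F ≠ 0 := by
    intro h
    rw [h, natDegree_zero] at hd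
    omega
  have hcard_le : F.roots.toFinset.card ≤ d :=
    le_trans (Multiset.toFinset_card_le _) (hd ▸ F.card_roots')
  have hcard : F.roots.toFinset.card = d := le_antisymm hcard_le hlt
  have aux : ∀ k, k ≤ d → derivative^[k] F ≠ 0 ∧ (derivative^[k] F).natDegree = d - k ∧
      (derivative^[k] F).roots.toFinset.card = d - k := by
    intro k
    induction k with
    | zero => intro _; exact ⟨hF0, by simpa using hd, by simpa using hcard⟩
    | succ k ih =>
      intro hk
      obtain ⟨h0, hdeg, hcardk⟩ := ih (Nat.le_of_succ_le hk)
      set q := derivative^[k] F with hq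
      have hq1 : q.natDegree ≠ 0 := by omega
      have hdne : derivative q ≠ 0 := fun h =>
        hq1 (natDegree_eq_zero_of_derivative_eq_zero h)
      have hle : (derivative q).roots.toFinset.card ≤ d - (k + 1) := by
        calc (derivative q).roots.toFinset.card
            ≤ Multiset.card (derivative q).roots := Multiset.toFinset_card_le _
          _ ≤ (derivative q).natDegree := (derivative q).card_roots'
          _ ≤ q.natDegree - 1 := natDegree_derivative_le q
          _ = d - (k + 1) := by omega
      have hge : d - k ≤ (derivative q).roots.toFinset.card + 1 := by
        calc d - k = q.roots.toFinset.card := hcardk.symm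
          _ ≤ _ := q.card_roots_toFinset_le_derivative
      have hcard' : (derivative q).roots.toFinset.card = d - (k + 1) := by omega
      have hdeg' : (derivative q).natDegree = d - (k + 1) := by
        have h1' : (derivative q).natDegree ≤ q.natDegree - 1 := natDegree_derivative_le q
        have h2' : d - (k + 1) ≤ (derivative q).natDegree := by
          rw [← hcard']
          exact le_trans (Multiset.toFinset_card_le _) (derivative q).card_roots'
        omega
      refine ⟨?_, ?_, ?_⟩ <;> rw [Function.iterate_succ_apply', ← hq]
      · exact hdne
      · exact hdeg'
      · exact hcard'
  obtain ⟨hG0, hGdeg, hGcard⟩ := aux (i - 1) (by omega)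
  set G := derivative^[i - 1] F with hGdef
  have hc0 : G.coeff 0 = 0 := by
    rw [hGdef, coeff_iterate_derivative]
    simp [hci1]
  have hc1 : G.coeff 1 = 0 := by
    rw [hGdef, coeff_iterate_derivative]
    have h : 1 + (i - 1) = i := by omega
    rw [h, hci, smul_zero]
  have hdvd : X ^ 2 ∣ G := X_pow_dvd_iff.mpr (by
    intro m hm
    interval_cases m
    · exact hc0
    · exact hc1)
  have hmul : 2 ≤ G.rootMultiplicity 0 := by
    rw [le_rootMultiplicity_iff hG0]
    simpa using hdvd
  have hcount : 2 ≤ G.roots.count 0 := by rwa [count_roots]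
  -- roots of G are all distinct
  have hrc : Multiset.card G.roots ≤ d - (i - 1) := hGdeg ▸ G.card_roots'
  have hdedup_card : Multiset.card G.roots.dedup = G.roots.toFinset.card := rfl
  have heq : G.roots.dedup = G.roots :=
    Multiset.eq_of_le_of_card_le (Multiset.dedup_le _) (by omega)
  have hnodup : G.roots.Nodup := heq ▸ Multiset.nodup_dedup _
  have := Multiset.nodup_iff_count_le_one.mp hnodup 0
  omega
end

section
/- For all natural numbers d and i with i < d, there exists a polynomial F ∈ ℝ[x] of degree d having d distinct real roots (i.e. F splits over ℝ and its root set has cardinality d) such that the coefficient of x^i in F is zero. -/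
/-!
Start from `G = ∏_{k<d} (X - k)`, which has `d` distinct real roots. Each differentiation loses at
most one real root (Rolle), so `G⁽ⁱ⁾` has a real root `r`. The translate `G(X + r)` still has `d`
distinct real roots, and its coefficient of `X^i` is `G⁽ⁱ⁾(r) / i! = 0`.
-/

open Polynomial Nat

namespace Polynomial

theorem card_roots_sub_le_card_roots_iterate_derivative (p : ℝ[X]) (k : ℕ) :
    Multiset.card p.roots - k ≤ Multiset.card (derivative^[k] p).roots := by
  induction k with
  | zero => simp
  | succ k ih =>
    rw [Function.iterate_succ_apply']
    have := card_roots_le_derivative (derivative^[k] p)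
    omega

theorem exists_isRoot_iterate_derivative_of_lt_card_roots {p : ℝ[X]} {k : ℕ}
    (hk : k < Multiset.card p.roots) : ∃ r, (derivative^[k] p).IsRoot r := by
  obtain ⟨r, hr⟩ := Multiset.card_pos_iff_exists_mem.mp
    ((Nat.sub_pos_of_lt hk).trans_le (card_roots_sub_le_card_roots_iterate_derivative p k))
  exact ⟨r, isRoot_of_mem_roots hr⟩

theorem factorial_mul_coeff_taylor {R : Type*} [CommSemiring R] (r : R) (f : R[X]) (n : ℕ) :
    n ! * (taylor r f).coeff n = (derivative^[n] f).eval r := by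
  rw [taylor_coeff, ← factorial_smul_hasseDeriv, LinearMap.smul_apply, nsmul_eq_mul, eval_mul,
    eval_natCast]

theorem roots_taylor {R : Type*} [CommRing R] [IsDomain R] (r : R) (f : R[X]) :
    (taylor r f).roots = f.roots.map (· - r) := by
  classical
  ext a
  calc (taylor r f).roots.count a = f.roots.count (a + r) := by
        rw [count_roots, count_roots, rootMultiplicity_eq_natTrailingDegree,
          rootMultiplicity_eq_natTrailingDegree, ← taylor_apply, ← taylor_apply, taylor_taylor]
    _ = (f.roots.map (· - r)).count (a + r - r) :=
        (Multiset.count_map_eq_count' _ _ sub_left_injective _).symm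
    _ = (f.roots.map (· - r)).count a := by rw [add_sub_cancel_right]

end Polynomial

/-- For every `i < d` there is a real polynomial `F` of degree `d` having `d`
distinct real roots (it splits over `ℝ` and its root set has cardinality `d`)
whose coefficient of `x^i` vanishes. -/
theorem exists_poly_all_real_roots_with_zero_coeff (d i : ℕ) (hi : i < d) :
    ∃ F : Polynomial ℝ, F.natDegree = d ∧
      F.Splits ∧
      F.roots.toFinset.card = d ∧
      F.coeff i = 0 := by
  set s : Finset ℝ := (Finset.range d).map Nat.castEmbedding
  have hs : s.card = d := by simp [s]
  set G : ℝ[X] := ∏ a ∈ s, (X - C a)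
  have hG : G.roots = s.val := roots_prod_X_sub_C s
  obtain ⟨r, hr⟩ : ∃ r, (derivative^[i] G).IsRoot r :=
    exists_isRoot_iterate_derivative_of_lt_card_roots (by rwa [hG, Finset.card_val, hs])
  refine ⟨taylor r G, ?_, ?_, ?_, ?_⟩
  · rw [natDegree_taylor, natDegree_finsetProd_X_sub_C_eq_card, hs]
  · rw [taylor_apply]
    exact (Splits.prod fun a _ ↦ Splits.X_sub_C a).comp_X_add_C r
  · rw [roots_taylor, hG, Multiset.toFinset_card_of_nodup (s.nodup.map sub_left_injective),
      Multiset.card_map, Finset.card_val, hs]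
  · have h := factorial_mul_coeff_taylor r G i
    rw [hr.eq_zero] at h
    exact (mul_eq_zero.mp h).resolve_left (by positivity)
end

section
/- Let 0 < a ≤ b be natural numbers. Then there exists a homogeneous polynomial G of degree b+1 in ℂ[y₀,y₁] lying in the ideal generated by y₀^{a+1} and y₁^{b+1}, such that G is a product of b+1 pairwise linearly independent linear forms (equivalently, G is a nonzero binary form of degree b+1 with b+1 distinct roots in ℙ¹(ℂ)). -/
/-!
Take `G = y₀^(b+1) + y₁^(b+1)`, which lies in the ideal because `a ≤ b`. If `ω^(b+1) = -1` and `ζ`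
is a primitive `(b+1)`-th root of unity, then `G = ∏ₖ (y₀ - ζ^k ω y₁)`, and the ratios `ζ^k ω`,
`k < b + 1`, are pairwise distinct.
-/

open MvPolynomial Finset

theorem IsPrimitiveRoot.pow_sub_pow_eq_prod_range {R : Type*} [CommRing R] [IsDomain R]
    {ζ : R} {n : ℕ} (hζ : IsPrimitiveRoot ζ n) (hn : 0 < n) (x y : R) :
    x ^ n - y ^ n = ∏ i ∈ range n, (x - ζ ^ i * y) := by
  have : NeZero n := ⟨hn.ne'⟩
  rw [hζ.pow_sub_pow_eq_prod_sub_mul x y hn]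
  symm
  refine prod_nbij (ζ ^ ·) (fun i _ ↦ ?_) hζ.injOn_pow (fun ξ hξ ↦ ?_) (fun _ _ ↦ rfl)
  · rw [Polynomial.mem_nthRootsFinset hn, ← pow_mul, mul_comm, pow_mul, hζ.pow_eq_one, one_pow]
  · obtain ⟨i, hi, rfl⟩ := hζ.eq_pow_of_pow_eq_one ((Polynomial.mem_nthRootsFinset hn 1).1 hξ)
    exact ⟨i, mem_range.2 hi, rfl⟩

section LinearForms

variable {σ R : Type*} [CommRing R]

theorem MvPolynomial.X_pow_add_X_pow_eq_prod [IsDomain R] {ζ ω : R} {n : ℕ}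
    (hζ : IsPrimitiveRoot ζ n) (hn : 0 < n) (hω : ω ^ n = -1) (i j : σ) :
    (X i ^ n + X j ^ n : MvPolynomial σ R) = ∏ k : Fin n, (X i - C (ζ ^ (k : ℕ) * ω) * X j) := by
  have h := (hζ.map_of_injective (C_injective σ R)).pow_sub_pow_eq_prod_range hn (X i) (C ω * X j)
  rw [mul_pow, ← C_pow, hω, C_neg, C_1, neg_one_mul, sub_neg_eq_add, prod_range] at h
  simpa only [C_mul, C_pow, mul_assoc] using h

theorem MvPolynomial.isHomogeneous_X_sub_C_mul_X (i j : σ) (r : R) :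
    (X i - C r * X j : MvPolynomial σ R).IsHomogeneous 1 :=
  (isHomogeneous_X R i).sub (by simpa using (isHomogeneous_C σ r).mul (isHomogeneous_X R j))

theorem MvPolynomial.X_sub_C_mul_X_ne_smul [DecidableEq σ] {i j : σ} (hij : i ≠ j) {r s : R}
    (hrs : r ≠ s) (c : R) :
    (X i - C r * X j : MvPolynomial σ R) ≠ c • (X i - C s * X j) := by
  intro h
  have hc : 1 = c := by simpa [smul_eq_C_mul, hij] using congrArg (eval (Pi.single i 1)) h
  have hr : r = c * s := by simpa [smul_eq_C_mul, hij.symm] using congrArg (eval (Pi.single j 1)) h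
  exact hrs (by rw [hr, ← hc, one_mul])

end LinearForms

theorem exists_squarefree_form_in_perp_ideal_complex_general (a b : ℕ)
    (hab : a ≤ b) :
    ∃ (G : MvPolynomial (Fin 2) ℂ) (L : Fin (b + 1) → MvPolynomial (Fin 2) ℂ),
      G.IsHomogeneous (b + 1) ∧
      G ∈ Ideal.span {(X 0 : MvPolynomial (Fin 2) ℂ) ^ (a + 1), X 1 ^ (b + 1)} ∧
      (∀ i, (L i).IsHomogeneous 1) ∧
      (∀ i j, i ≠ j → ∀ c : ℂ, L i ≠ c • L j) ∧
      G = ∏ i, L i := by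
  obtain ⟨ω, hω⟩ := IsAlgClosed.exists_pow_nat_eq (-1 : ℂ) b.succ_pos
  have hζ := Complex.isPrimitiveRoot_exp (b + 1) b.succ_ne_zero
  have hω₀ : ω ≠ 0 := by rintro rfl; simp at hω
  refine ⟨X 0 ^ (b + 1) + X 1 ^ (b + 1), _, ?_, ?_, fun _ ↦ isHomogeneous_X_sub_C_mul_X _ _ _,
    fun k l hkl c ↦ X_sub_C_mul_X_ne_smul (by decide) ?_ c,
    X_pow_add_X_pow_eq_prod hζ b.succ_pos hω 0 1⟩
  · exact (isHomogeneous_X_pow _ _).add (isHomogeneous_X_pow _ _)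
  · refine Ideal.mem_span_pair.2 ⟨X 0 ^ (b - a), 1, ?_⟩
    rw [one_mul, ← pow_add, show b - a + (a + 1) = b + 1 by omega]
  · exact fun h ↦ hkl (Fin.ext (hζ.pow_inj k.isLt l.isLt (mul_right_cancel₀ hω₀ h)))

/-- For `0 < a ≤ b`, there is a homogeneous polynomial `G` of degree `b + 1` in
`ℂ[y₀,y₁]` lying in the ideal `(y₀^{a+1}, y₁^{b+1})` which is a product of
`b + 1` pairwise linearly independent linear forms. -/
theorem exists_squarefree_form_in_perp_ideal_complex (a b : ℕ) (ha : 0 < a)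
    (hab : a ≤ b) :
    ∃ (G : MvPolynomial (Fin 2) ℂ) (L : Fin (b + 1) → MvPolynomial (Fin 2) ℂ),
      G.IsHomogeneous (b + 1) ∧
      G ∈ Ideal.span {(X 0 : MvPolynomial (Fin 2) ℂ) ^ (a + 1), X 1 ^ (b + 1)} ∧
      (∀ i, (L i).IsHomogeneous 1) ∧
      (∀ i j, i ≠ j → ∀ c : ℂ, L i ≠ c • L j) ∧
      G = ∏ i, L i :=
  exists_squarefree_form_in_perp_ideal_complex_general a b hab
end

section
/- Let 0 < a ≤ b be natural numbers and let r ≤ a + b − 1. Then no nonzero homogeneous polynomial G of degree r in ℝ[y₀,y₁] lying in the ideal generated by y₀^{a+1} and y₁^{b+1} can be written as a product of r pairwise linearly independent real linear forms. -/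
/-!
Setting `y₁ = 1` turns `G = ∏ Lᵢ` into a real-rooted polynomial `p` of degree at least `r - 1`
whose lowest nonzero coefficient sits in degree at most `1`: pairwise independence allows at
most one factor proportional to `y₁` and at most one proportional to `y₀`. Membership in the
ideal kills the coefficients of `p` in degrees `r - b, …, a`, a window that contains the two
consecutive degrees `a - 1, a` and has nonzero coefficients on both sides. A real-rooted
polynomial has no such gap: differentiating moves the last nonzero coefficient below the gap to
degree `0`, where Newton's inequality `q₁² > 2 q₀ q₂` (for real-rooted `q` with `q₀ ≠ 0`) rules
out `q₁ = q₂ = 0`.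
-/

open MvPolynomial
open scoped Finset

namespace Polynomial

lemma coeff_sq_sub_X_sub_C_mul {R : Type*} [CommRing R] (a : R) (q : R[X]) :
    ((X - C a) * q).coeff 1 ^ 2 - 2 * ((X - C a) * q).coeff 0 * ((X - C a) * q).coeff 2 =
      q.coeff 0 ^ 2 + a ^ 2 * (q.coeff 1 ^ 2 - 2 * q.coeff 0 * q.coeff 2) := by
  simp only [coeff_X_sub_C_mul, mul_coeff_zero, coeff_sub, coeff_X_zero, coeff_C_zero]
  ring

section Newton

variable {K : Type*} [Field K] [LinearOrder K] [IsStrictOrderedRing K]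

lemma two_mul_coeff_zero_mul_coeff_two_le_prod_X_sub_C (s : Multiset K) :
    2 * (s.map (X - C ·)).prod.coeff 0 * (s.map (X - C ·)).prod.coeff 2 ≤
      (s.map (X - C ·)).prod.coeff 1 ^ 2 := by
  induction s using Multiset.induction_on with
  | empty => simp [coeff_one]
  | cons a s ih =>
    rw [← sub_nonneg, Multiset.map_cons, Multiset.prod_cons, coeff_sq_sub_X_sub_C_mul]
    have := sub_nonneg.2 ih
    positivity

theorem Splits.two_mul_coeff_zero_mul_coeff_two_lt {p : K[X]} (hp : p.Splits)
    (h0 : p.coeff 0 ≠ 0) (hdeg : p.natDegree ≠ 0) :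
    2 * p.coeff 0 * p.coeff 2 < p.coeff 1 ^ 2 := by
  obtain ⟨a, ha⟩ := Multiset.exists_mem_of_ne_zero (hp.roots_ne_zero hdeg)
  obtain ⟨s, hs⟩ := Multiset.exists_cons_of_mem ha
  have hp' := hp.eq_prod_roots
  rw [hs, Multiset.map_cons, Multiset.prod_cons] at hp'
  set q := (s.map (X - C ·)).prod
  rw [hp'] at h0 ⊢
  simp only [coeff_C_mul] at h0 ⊢
  have hq0 : q.coeff 0 ≠ 0 := by
    have h := right_ne_zero_of_mul h0
    rw [mul_coeff_zero] at h
    exact right_ne_zero_of_mul h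
  have key := coeff_sq_sub_X_sub_C_mul a q
  have := sub_nonneg.2 (two_mul_coeff_zero_mul_coeff_two_le_prod_X_sub_C s)
  have hlc : p.leadingCoeff ≠ 0 := left_ne_zero_of_mul h0
  rw [← sub_pos]
  calc (0 : K) < p.leadingCoeff ^ 2 *
        (q.coeff 0 ^ 2 + a ^ 2 * (q.coeff 1 ^ 2 - 2 * q.coeff 0 * q.coeff 2)) := by positivity
    _ = _ := by rw [← key]; ring

end Newton

theorem Splits.derivative {p : ℝ[X]} (hp : p.Splits) : p.derivative.Splits := by
  rw [splits_iff_card_roots] at hp ⊢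
  have := card_roots_le_derivative p
  have := natDegree_derivative_le p
  exact le_antisymm (card_roots' _) (by omega)

theorem Splits.iterate_derivative {p : ℝ[X]} (hp : p.Splits) (k : ℕ) :
    (Polynomial.derivative^[k] p).Splits := by
  induction k with
  | zero => exact hp
  | succ k ih => rw [Function.iterate_succ_apply']; exact ih.derivative

theorem Splits.natDegree_le_of_coeff_eq_zero {p : ℝ[X]} (hp : p.Splits) {j : ℕ}
    (hj : p.coeff j ≠ 0) (hj1 : p.coeff (j + 1) = 0) (hj2 : p.coeff (j + 2) = 0) :
    p.natDegree ≤ j := by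
  by_contra! hlt
  set q := Polynomial.derivative^[j] p
  have hq0 : q.coeff 0 ≠ 0 := by
    rw [coeff_iterate_derivative, zero_add, Nat.descFactorial_self]
    exact smul_ne_zero (Nat.factorial_ne_zero j) hj
  have hq1 : q.coeff 1 = 0 := by rw [coeff_iterate_derivative, add_comm, hj1, smul_zero]
  have hq2 : q.coeff 2 = 0 := by rw [coeff_iterate_derivative, add_comm, hj2, smul_zero]
  have hq : q.natDegree ≠ 0 := by
    have hlead : q.coeff (p.natDegree - j) ≠ 0 := by
      rw [coeff_iterate_derivative, Nat.sub_add_cancel hlt.le]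
      refine smul_ne_zero ?_ (leadingCoeff_ne_zero.2 (fun h => hj (by simp [h])))
      exact (Nat.descFactorial_pos.2 hlt.le).ne'
    have := le_natDegree_of_ne_zero hlead
    omega
  have := (hp.iterate_derivative j).two_mul_coeff_zero_mul_coeff_two_lt hq0 hq
  rw [hq1, hq2] at this
  simp at this

theorem Splits.natDegree_lt_of_coeff_eq_zero {p : ℝ[X]} (hp : p.Splits) {i k : ℕ}
    (hi : p.coeff i ≠ 0) (hik : i < k) (hk : p.coeff k = 0) (hk1 : p.coeff (k + 1) = 0) :
    p.natDegree < k := by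
  classical
  set j := Nat.findGreatest (fun m => p.coeff m ≠ 0) k
  have hj : p.coeff j ≠ 0 := Nat.findGreatest_spec (P := fun m => p.coeff m ≠ 0) hik.le hi
  have hjk : j < k := (Nat.findGreatest_le k).lt_of_ne fun h : j = k => hj (h ▸ hk)
  have hvanish : ∀ m, j < m → m ≤ k + 1 → p.coeff m = 0 := by
    intro m hjm hmk
    rcases hmk.lt_or_eq with hmk | rfl
    · by_contra hm
      exact Nat.findGreatest_is_greatest hjm (by omega) hm
    · exact hk1
  exact (hp.natDegree_le_of_coeff_eq_zero hj (hvanish _ (by omega) (by omega))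
    (hvanish _ (by omega) (by omega))).trans_lt hjk

theorem natTrailingDegree_prod {R ι : Type*} [CommSemiring R] [NoZeroDivisors R] [Nontrivial R]
    (s : Finset ι) (f : ι → R[X]) (h : ∀ i ∈ s, f i ≠ 0) :
    (∏ i ∈ s, f i).natTrailingDegree = ∑ i ∈ s, (f i).natTrailingDegree := by
  classical
  induction s using Finset.induction_on with
  | empty => simp
  | insert i s hi ih =>
    rw [Finset.prod_insert hi, Finset.sum_insert hi, natTrailingDegree_mul (h i (by simp))
      (Finset.prod_ne_zero_iff.2 fun j hj => h j (by simp [hj])), ih fun j hj => h j (by simp [hj])]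

section LinearFactors

variable {K : Type*} [Field K] [DecidableEq K]

theorem natDegree_C_mul_X_add_C (c d : K) :
    (C c * X + C d).natDegree = if c = 0 then 0 else 1 := by
  split_ifs with hc
  · simp [hc]
  · exact natDegree_linear hc

theorem natTrailingDegree_C_mul_X_add_C {c d : K} (h : C c * X + C d ≠ 0) :
    (C c * X + C d).natTrailingDegree = if d = 0 then 1 else 0 := by
  split_ifs with hd
  · subst hd
    rw [C_0, add_zero] at h ⊢
    rw [natTrailingDegree_mul (left_ne_zero_of_mul h) X_ne_zero, natTrailingDegree_C,
      natTrailingDegree_X]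
  · exact natTrailingDegree_eq_zero.2 (Or.inr (by simpa using hd))

variable {ι : Type*} [Fintype ι] {c d : ι → K} (h : ∏ i, (C (c i) * X + C (d i)) ≠ 0)
include h

theorem natDegree_prod_C_mul_X_add_C :
    (∏ i, (C (c i) * X + C (d i))).natDegree = #{i | c i ≠ 0} := by
  have h := Finset.prod_ne_zero_iff.1 h
  simp only [natDegree_prod _ _ h, natDegree_C_mul_X_add_C, Finset.card_filter, ite_not]

theorem natTrailingDegree_prod_C_mul_X_add_C :
    (∏ i, (C (c i) * X + C (d i))).natTrailingDegree = #{i | d i = 0} := by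
  have h := Finset.prod_ne_zero_iff.1 h
  simp only [natTrailingDegree_prod _ _ h,
    natTrailingDegree_C_mul_X_add_C (h _ (Finset.mem_univ _)), Finset.card_filter]

end LinearFactors

end Polynomial

theorem card_filter_fst_eq_zero_le_one {K ι : Type*} [Field K] [DecidableEq K] [Fintype ι]
    {v : ι → K × K} (hv : ∀ i j, i ≠ j → ∀ e : K, v i ≠ e • v j) :
    #{i | (v i).1 = 0} ≤ 1 := by
  refine Finset.card_le_one.2 fun i hi j hj => by_contra fun hij => ?_
  simp only [Finset.mem_filter, Finset.mem_univ, true_and] at hi hj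
  by_cases hj2 : (v j).2 = 0
  · exact hv j i (Ne.symm hij) 0 (Prod.ext (by simp [hj]) (by simp [hj2]))
  · exact hv i j hij ((v i).2 / (v j).2) (Prod.ext (by simp [hi, hj]) (by simp [hj2]))

theorem card_filter_snd_eq_zero_le_one {K ι : Type*} [Field K] [DecidableEq K] [Fintype ι]
    {v : ι → K × K} (hv : ∀ i j, i ≠ j → ∀ e : K, v i ≠ e • v j) :
    #{i | (v i).2 = 0} ≤ 1 :=
  card_filter_fst_eq_zero_le_one (v := Prod.swap ∘ v) fun i j hij e h =>
    hv i j hij e (by simpa using congrArg Prod.swap h)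

lemma Finsupp.eq_single_zero_add_single_one (m : Fin 2 →₀ ℕ) :
    m = Finsupp.single 0 (m 0) + Finsupp.single 1 (m 1) := by
  ext i
  fin_cases i <;> simp

lemma Finsupp.degree_fin_two (m : Fin 2 →₀ ℕ) : m.degree = m 0 + m 1 := by
  rw [Finsupp.degree_eq_sum, Fin.sum_univ_two]

namespace MvPolynomial

variable {R : Type*} [CommSemiring R]

theorem coeff_eq_zero_of_mem_span_X_pow_pair {σ : Type*} {G : MvPolynomial σ R} {i j : σ}
    {a b : ℕ} (hG : G ∈ Ideal.span {X i ^ (a + 1), X j ^ (b + 1)}) {m : σ →₀ ℕ}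
    (hi : m i ≤ a) (hj : m j ≤ b) : coeff m G = 0 := by
  obtain ⟨u, v, rfl⟩ := Ideal.mem_span_pair.1 hG
  rw [coeff_add, X_pow_eq_monomial, X_pow_eq_monomial, coeff_mul_monomial', coeff_mul_monomial',
    if_neg, if_neg, add_zero]
  · exact fun h => by simpa using (h j).trans hj
  · exact fun h => by simpa using (h i).trans hi

noncomputable def dehomogenize : MvPolynomial (Fin 2) R →ₐ[R] Polynomial R :=
  aeval ![Polynomial.X, 1]

lemma dehomogenize_monomial (m : Fin 2 →₀ ℕ) (c : R) :
    dehomogenize (monomial m c) = Polynomial.monomial (m 0) c := by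
  simp [dehomogenize, aeval_monomial, Finsupp.prod_fintype, Polynomial.C_mul_X_pow_eq_monomial]

lemma dehomogenize_C_mul_X_add_C_mul_X (c d : R) :
    dehomogenize (C c * X 0 + C d * X 1) = Polynomial.C c * Polynomial.X + Polynomial.C d := by
  simp [dehomogenize, Polynomial.algebraMap_eq]

noncomputable def linearCoeffs (L : MvPolynomial (Fin 2) R) : R × R :=
  (coeff (Finsupp.single 0 1) L, coeff (Finsupp.single 1 1) L)

namespace IsHomogeneous

variable {G : MvPolynomial (Fin 2) R} {r : ℕ}

lemma eq_single_of_coeff_ne_zero (hG : G.IsHomogeneous r) {m : Fin 2 →₀ ℕ}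
    (hm : coeff m G ≠ 0) : m = Finsupp.single 0 (m 0) + Finsupp.single 1 (r - m 0) := by
  have hdeg : m 0 + m 1 = r := by
    rw [← Finsupp.degree_fin_two]
    by_contra h
    exact hm (hG.coeff_eq_zero h)
  rw [← hdeg, Nat.add_sub_cancel_left]
  exact m.eq_single_zero_add_single_one

/-- For `k > r` both sides vanish, `r - k` being truncated to `0`. -/
theorem coeff_dehomogenize (hG : G.IsHomogeneous r) (k : ℕ) :
    (dehomogenize G).coeff k = coeff (Finsupp.single 0 k + Finsupp.single 1 (r - k)) G := by
  conv_lhs => rw [G.as_sum]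
  simp only [map_sum, dehomogenize_monomial, Polynomial.finsetSum_coeff,
    Polynomial.coeff_monomial]
  rw [Finset.sum_eq_single (Finsupp.single 0 k + Finsupp.single 1 (r - k))]
  · simp
  · rintro m hm hne
    rw [if_neg]
    rintro rfl
    exact hne (hG.eq_single_of_coeff_ne_zero (mem_support_iff.1 hm))
  · intro hm
    rw [notMem_support_iff.1 hm, ite_self]

theorem dehomogenize_ne_zero (hG : G.IsHomogeneous r) (h0 : G ≠ 0) : dehomogenize G ≠ 0 := by
  obtain ⟨m, hm⟩ := exists_coeff_ne_zero h0
  intro h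
  rw [hG.eq_single_of_coeff_ne_zero hm, ← hG.coeff_dehomogenize, h, Polynomial.coeff_zero] at hm
  exact hm rfl

theorem coeff_dehomogenize_eq_zero_of_mem_span (hG : G.IsHomogeneous r) {a b k : ℕ}
    (hGI : G ∈ Ideal.span {X 0 ^ (a + 1), X 1 ^ (b + 1)}) (hka : k ≤ a) (hkb : r ≤ b + k) :
    (dehomogenize G).coeff k = 0 := by
  rw [hG.coeff_dehomogenize]
  exact coeff_eq_zero_of_mem_span_X_pow_pair hGI (by simpa) (by simp; omega)

theorem eq_C_mul_X_add_C_mul_X {L : MvPolynomial (Fin 2) R} (hL : L.IsHomogeneous 1) :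
    L = C (linearCoeffs L).1 * X 0 + C (linearCoeffs L).2 * X 1 := by
  ext m
  simp only [linearCoeffs, coeff_add, coeff_C_mul, coeff_X, mul_ite, mul_one, mul_zero]
  by_cases hm : m.degree = 1
  · rw [Finsupp.degree_fin_two] at hm
    rw [m.eq_single_zero_add_single_one]
    rcases Nat.add_eq_one_iff.1 hm with ⟨h0, h1⟩ | ⟨h0, h1⟩ <;>
      simp [h0, h1, Finsupp.single_left_inj]
  · rw [hL.coeff_eq_zero hm, if_neg, if_neg, add_zero] <;>
    · rintro rfl
      simp at hm

theorem eq_smul_of_linearCoeffs_eq {L L' : MvPolynomial (Fin 2) R} (hL : L.IsHomogeneous 1)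
    (hL' : L'.IsHomogeneous 1) {e : R} (h : linearCoeffs L = e • linearCoeffs L') : L = e • L' := by
  calc L = C (linearCoeffs L).1 * X 0 + C (linearCoeffs L).2 * X 1 := hL.eq_C_mul_X_add_C_mul_X
    _ = e • (C (linearCoeffs L').1 * X 0 + C (linearCoeffs L').2 * X 1) := by
        rw [h, Prod.smul_fst, Prod.smul_snd, smul_eq_mul, smul_eq_mul, smul_eq_C_mul, map_mul,
          map_mul]
        ring
    _ = e • L' := by rw [← hL'.eq_C_mul_X_add_C_mul_X]

end IsHomogeneous

section LinearForms

variable {K ι : Type*} [Field K] {L : ι → MvPolynomial (Fin 2) K}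
  (h1 : ∀ i, (L i).IsHomogeneous 1)
include h1

theorem linearCoeffs_ne_smul_linearCoeffs (hind : ∀ i j, i ≠ j → ∀ e : K, L i ≠ e • L j)
    {i j : ι} (hij : i ≠ j) (e : K) : linearCoeffs (L i) ≠ e • linearCoeffs (L j) := fun h =>
  hind i j hij e ((h1 i).eq_smul_of_linearCoeffs_eq (h1 j) h)

variable [Fintype ι]

theorem dehomogenize_prod_eq : dehomogenize (∏ i, L i) =
    ∏ i, (Polynomial.C (linearCoeffs (L i)).1 * Polynomial.X +
      Polynomial.C (linearCoeffs (L i)).2) := by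
  rw [map_prod]
  refine Finset.prod_congr rfl fun i _ => ?_
  conv_lhs => rw [(h1 i).eq_C_mul_X_add_C_mul_X]
  exact dehomogenize_C_mul_X_add_C_mul_X _ _

theorem splits_dehomogenize_prod : (dehomogenize (∏ i, L i)).Splits := by
  rw [dehomogenize_prod_eq h1]
  exact Polynomial.Splits.prod fun i _ =>
    Polynomial.Splits.of_natDegree_le_one Polynomial.natDegree_linear_le

variable [DecidableEq K] (hind : ∀ i j, i ≠ j → ∀ e : K, L i ≠ e • L j)
  (h0 : ∏ i, L i ≠ 0)
include hind h0

theorem card_sub_one_le_natDegree_dehomogenize_prod :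
    Fintype.card ι - 1 ≤ (dehomogenize (∏ i, L i)).natDegree := by
  have hp := (IsHomogeneous.prod _ _ _ fun i _ => h1 i).dehomogenize_ne_zero h0
  rw [dehomogenize_prod_eq h1] at hp ⊢
  rw [Polynomial.natDegree_prod_C_mul_X_add_C hp]
  have hzero : #{i | (linearCoeffs (L i)).1 = 0} ≤ 1 :=
    card_filter_fst_eq_zero_le_one fun i j hij => linearCoeffs_ne_smul_linearCoeffs h1 hind hij
  have hsum : #{i | (linearCoeffs (L i)).1 = 0} + #{i | (linearCoeffs (L i)).1 ≠ 0} =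
      Fintype.card ι :=
    Finset.card_filter_add_card_filter_not _
  omega

theorem natTrailingDegree_dehomogenize_prod_le_one :
    (dehomogenize (∏ i, L i)).natTrailingDegree ≤ 1 := by
  have hp := (IsHomogeneous.prod _ _ _ fun i _ => h1 i).dehomogenize_ne_zero h0
  rw [dehomogenize_prod_eq h1] at hp ⊢
  rw [Polynomial.natTrailingDegree_prod_C_mul_X_add_C hp]
  exact card_filter_snd_eq_zero_le_one fun i j hij =>
    linearCoeffs_ne_smul_linearCoeffs h1 hind hij

end LinearForms

end MvPolynomial

/-- For `0 < a ≤ b` and `r ≤ a + b - 1`, no nonzero homogeneous polynomial `G`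
of degree `r` in `ℝ[y₀,y₁]` lying in the ideal `(y₀^{a+1}, y₁^{b+1})` is a
product of `r` pairwise linearly independent real linear forms. -/
theorem no_squarefree_form_in_perp_ideal_low_degree_real
    (a b r : ℕ) (ha : 0 < a) (hab : a ≤ b) (hr : r ≤ a + b - 1)
    (G : MvPolynomial (Fin 2) ℝ) (hG0 : G ≠ 0) (hGh : G.IsHomogeneous r)
    (hGI : G ∈ Ideal.span {(X 0 : MvPolynomial (Fin 2) ℝ) ^ (a + 1), X 1 ^ (b + 1)}) :
    ¬ ∃ L : Fin r → MvPolynomial (Fin 2) ℝ,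
      (∀ i, (L i).IsHomogeneous 1) ∧
      (∀ i j, i ≠ j → ∀ c : ℝ, L i ≠ c • L j) ∧
      G = ∏ i, L i := by
  rintro ⟨L, hL1, hLind, rfl⟩
  set p := dehomogenize (∏ i, L i)
  have hp0 : p ≠ 0 := hGh.dehomogenize_ne_zero hG0
  have hdeg : r - 1 ≤ p.natDegree := by
    simpa only [Fintype.card_fin] using card_sub_one_le_natDegree_dehomogenize_prod hL1 hLind hG0
  have htrail : p.natTrailingDegree ≤ 1 :=
    natTrailingDegree_dehomogenize_prod_le_one hL1 hLind hG0
  have hgap : ∀ k, k ≤ a → r ≤ b + k → p.coeff k = 0 := fun k hka hkb =>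
    hGh.coeff_dehomogenize_eq_zero_of_mem_span hGI hka hkb
  have hlow : p.natTrailingDegree < a - 1 := by
    by_contra! h
    exact Polynomial.coeff_natTrailingDegree_ne_zero.2 hp0 (hgap _ (by omega) (by omega))
  have hhigh : p.natDegree < a - 1 :=
    (splits_dehomogenize_prod hL1).natDegree_lt_of_coeff_eq_zero
      (Polynomial.coeff_natTrailingDegree_ne_zero.2 hp0) hlow (hgap _ (by omega) (by omega))
      (hgap _ (by omega) (by omega))
  exact Polynomial.leadingCoeff_ne_zero.2 hp0 (hgap _ (by omega) (by omega))
end
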